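/- arXiv:1703.01266 — 6 statements merged into one kernel-verified Lean document; each statement's English description precedes it below -/
import Mathlib

section
/- The asymmetry weight is convex: for all density matrices ρ₁, ρ₂ on ℂ^d and every p ∈ [0,1], A_w(pρ₁ + (1−p)ρ₂) ≤ p·A_w(ρ₁) + (1−p)·A_w(ρ₂). -/
open Matrix BigOperators
open scoped ComplexOrder

noncomputable section

/-- A density matrix: positive semidefinite with unit trace. -/
def IsDensity {n : Type*} [Fintype n] (ρ : Matrix n n ℂ) : Prop :=
  ρ.PosSemidef ∧ ρ.trace = 1

/-- A state is symmetric w.r.t. the representation `U` if it is invariant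
under conjugation by every `U g`. -/
def IsSymmetricState {d : ℕ} {G : Type*} [Group G]
    (U : G → Matrix (Fin d) (Fin d) ℂ) (σ : Matrix (Fin d) (Fin d) ℂ) : Prop :=
  ∀ g : G, U g * σ * (U g)ᴴ = σ

/-- The asymmetry weight of a state `ρ`. -/
noncomputable def asymWeight {d : ℕ} {G : Type*} [Group G]
    (U : G → Matrix (Fin d) (Fin d) ℂ) (ρ : Matrix (Fin d) (Fin d) ℂ) : ℝ :=
  sInf {s : ℝ | s ∈ Set.Icc (0 : ℝ) 1 ∧
    ∃ σ τ : Matrix (Fin d) (Fin d) ℂ,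
      IsDensity σ ∧ IsSymmetricState U σ ∧ IsDensity τ ∧
      ρ = (1 - s) • σ + s • τ}

/-!
For convex sets `C` and `a, b ≥ 0` one has `(a + b) • C = a • C + b • C`, so mixing a
decomposition `ρ₁ = (1 - s₁) σ₁ + s₁ τ₁` with `ρ₂ = (1 - s₂) σ₂ + s₂ τ₂` yields a
decomposition of `p ρ₁ + (1 - p) ρ₂` with weight `p s₁ + (1 - p) s₂`, since both the symmetric
states and all states form convex sets. Taking infima gives convexity; the sets of admissible
weights are nonempty because `s = 1` is always admissible, with the maximally mixed state as
symmetric part.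
-/

open Pointwise

section MixtureWeights

variable {E : Type*} [AddCommGroup E] [Module ℝ E]

def mixtureWeights (C D : Set E) (x : E) : Set ℝ :=
  {s | s ∈ Set.Icc (0 : ℝ) 1 ∧ x ∈ (1 - s) • C + s • D}

variable {C D : Set E}

lemma one_mem_mixtureWeights (hC : C.Nonempty) {x : E} (hx : x ∈ D) :
    (1 : ℝ) ∈ mixtureWeights C D x := by
  obtain ⟨c, hc⟩ := hC
  refine ⟨⟨zero_le_one, le_rfl⟩, ?_⟩
  simpa using Set.add_mem_add (Set.smul_mem_smul_set (a := (0 : ℝ)) hc)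
    (Set.smul_mem_smul_set (a := (1 : ℝ)) hx)

lemma smul_add_smul_mixtureWeights_subset (hC : Convex ℝ C) (hD : Convex ℝ D)
    (x y : E) {p : ℝ} (hp : p ∈ Set.Icc (0 : ℝ) 1) :
    p • mixtureWeights C D x + (1 - p) • mixtureWeights C D y ⊆
      mixtureWeights C D (p • x + (1 - p) • y) := by
  rintro _ ⟨_, ⟨s₁, ⟨hs₁, hx⟩, rfl⟩, _, ⟨s₂, ⟨hs₂, hy⟩, rfl⟩, rfl⟩
  obtain ⟨hp0, hp1⟩ := hp
  obtain ⟨hs₁0, hs₁1⟩ := hs₁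
  obtain ⟨hs₂0, hs₂1⟩ := hs₂
  have hq0 : 0 ≤ 1 - p := sub_nonneg.2 hp1
  refine ⟨⟨by positivity, by simp only [smul_eq_mul]; nlinarith⟩, ?_⟩
  have hmem := Set.add_mem_add (Set.smul_mem_smul_set (a := p) hx)
    (Set.smul_mem_smul_set (a := 1 - p) hy)
  have hC_split :=
    hC.add_smul (mul_nonneg hp0 (sub_nonneg.2 hs₁1)) (mul_nonneg hq0 (sub_nonneg.2 hs₂1))
  have hD_split := hD.add_smul (mul_nonneg hp0 hs₁0) (mul_nonneg hq0 hs₂0)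
  simp only [smul_add, smul_smul] at hmem
  convert hmem using 1
  simp only [smul_eq_mul]
  rw [show 1 - (p * s₁ + (1 - p) * s₂) = p * (1 - s₁) + (1 - p) * (1 - s₂) by ring,
    hC_split, hD_split]
  abel

lemma sInf_mixtureWeights_convex (hC : Convex ℝ C) (hD : Convex ℝ D) {x y : E}
    (hx : (mixtureWeights C D x).Nonempty) (hy : (mixtureWeights C D y).Nonempty)
    {p : ℝ} (hp : p ∈ Set.Icc (0 : ℝ) 1) :
    sInf (mixtureWeights C D (p • x + (1 - p) • y)) ≤
      p * sInf (mixtureWeights C D x) + (1 - p) * sInf (mixtureWeights C D y) := by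
  have hbdd : ∀ z, BddBelow (mixtureWeights C D z) := fun z => ⟨0, fun s hs => hs.1.1⟩
  calc sInf (mixtureWeights C D (p • x + (1 - p) • y))
      ≤ sInf (p • mixtureWeights C D x + (1 - p) • mixtureWeights C D y) :=
        csInf_le_csInf (hbdd _) (hx.smul_set.add hy.smul_set)
          (smul_add_smul_mixtureWeights_subset hC hD x y hp)
    _ = p * sInf (mixtureWeights C D x) + (1 - p) * sInf (mixtureWeights C D y) := by
        rw [csInf_add hx.smul_set ((hbdd x).smul_of_nonneg hp.1) hy.smul_set
          ((hbdd y).smul_of_nonneg (sub_nonneg.2 hp.2)),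
          Real.sInf_smul_of_nonneg hp.1, Real.sInf_smul_of_nonneg (sub_nonneg.2 hp.2)]
        rfl

end MixtureWeights

section DensityMatrices

variable {n : Type*} [Fintype n]

lemma convex_setOf_isDensity : Convex ℝ {ρ : Matrix n n ℂ | IsDensity ρ} := by
  intro x hx y hy a b ha hb hab
  refine ⟨(hx.1.smul ha).add (hy.1.smul hb), ?_⟩
  simp [trace_add, trace_smul, hx.2, hy.2, ← Complex.ofReal_add, hab]

lemma IsDensity.nonempty {ρ : Matrix n n ℂ} (hρ : IsDensity ρ) : Nonempty n := by
  by_contra h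
  rw [not_nonempty_iff] at h
  simpa [Matrix.trace] using hρ.2

lemma isDensity_maximallyMixed [Nonempty n] [DecidableEq n] :
    IsDensity ((Fintype.card n : ℝ)⁻¹ • (1 : Matrix n n ℂ)) := by
  refine ⟨PosSemidef.one.smul (by positivity), ?_⟩
  simp [trace_smul, Fintype.card_ne_zero]

end DensityMatrices

def symmetricStates {d : ℕ} {G : Type*} [Group G] (U : G → Matrix (Fin d) (Fin d) ℂ) :
    Set (Matrix (Fin d) (Fin d) ℂ) :=
  {σ | IsDensity σ ∧ IsSymmetricState U σ}

section SymmetricStates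

variable {d : ℕ} {G : Type*} [Group G] (U : G → Matrix (Fin d) (Fin d) ℂ)

lemma convex_symmetricStates : Convex ℝ (symmetricStates U) := by
  refine convex_setOf_isDensity.inter fun x hx y hy a b _ _ _ g => ?_
  simp only [mul_add, add_mul, mul_smul_comm, smul_mul_assoc, hx g, hy g]

lemma isSymmetricState_smul_one (hU : ∀ g, U g ∈ unitaryGroup (Fin d) ℂ) (c : ℝ) :
    IsSymmetricState U (c • 1) := fun g => by
  rw [mul_smul_comm, mul_one, smul_mul_assoc]
  exact congrArg _ (mem_unitaryGroup_iff.mp (hU g))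

lemma asymWeight_eq_sInf_mixtureWeights (ρ : Matrix (Fin d) (Fin d) ℂ) :
    asymWeight U ρ = sInf (mixtureWeights (symmetricStates U) {τ | IsDensity τ} ρ) := by
  unfold asymWeight mixtureWeights symmetricStates
  congr 1
  ext s
  simp only [Set.mem_add, Set.mem_smul_set, Set.mem_ofPred_eq]
  aesop

end SymmetricStates

theorem asymWeight_convex_general
    {d : ℕ} {G : Type*} [Group G]
    (U : G → Matrix (Fin d) (Fin d) ℂ)
    (hU : ∀ g, U g ∈ Matrix.unitaryGroup (Fin d) ℂ)
    (ρ₁ ρ₂ : Matrix (Fin d) (Fin d) ℂ) (hρ₁ : IsDensity ρ₁) (hρ₂ : IsDensity ρ₂)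
    (p : ℝ) (hp : p ∈ Set.Icc (0 : ℝ) 1) :
    asymWeight U (p • ρ₁ + (1 - p) • ρ₂) ≤
      p * asymWeight U ρ₁ + (1 - p) * asymWeight U ρ₂ := by
  have := hρ₁.nonempty
  have hsymm : (symmetricStates U).Nonempty :=
    ⟨_, isDensity_maximallyMixed, isSymmetricState_smul_one U hU _⟩
  simp only [asymWeight_eq_sInf_mixtureWeights]
  exact sInf_mixtureWeights_convex (convex_symmetricStates U) convex_setOf_isDensity
    ⟨1, one_mem_mixtureWeights hsymm hρ₁⟩ ⟨1, one_mem_mixtureWeights hsymm hρ₂⟩ hp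

theorem asymWeight_convex
    {d : ℕ} {G : Type*} [Group G] [Fintype G]
    (U : G → Matrix (Fin d) (Fin d) ℂ)
    (hU : ∀ g, U g ∈ Matrix.unitaryGroup (Fin d) ℂ)
    (hUhom : ∀ g₁ g₂, U (g₁ * g₂) = U g₁ * U g₂)
    (ρ₁ ρ₂ : Matrix (Fin d) (Fin d) ℂ) (hρ₁ : IsDensity ρ₁) (hρ₂ : IsDensity ρ₂)
    (p : ℝ) (hp : p ∈ Set.Icc (0 : ℝ) 1) :
    asymWeight U (p • ρ₁ + (1 - p) • ρ₂) ≤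
      p * asymWeight U ρ₁ + (1 - p) * asymWeight U ρ₂ :=
  asymWeight_convex_general U hU ρ₁ ρ₂ hρ₁ hρ₂ p hp
end
end

section
/- Let {K_i}_{i∈I} (I finite) be d×d complex matrices with Σ_i K_i† K_i = I, and suppose each suboperation Φ_i(X) = K_i X K_i† commutes with the group action, i.e., K_i (U_g X U_g†) K_i† = U_g (K_i X K_i†) U_g† for every matrix X, every i and every g ∈ G. Then for every density matrix ρ, A_w(ρ) ≥ Σ_{i : p_i > 0} p_i · A_w(ρ_i), where p_i = Tr(K_i ρ K_i†) and ρ_i = K_i ρ K_i† / p_i. -/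
open Matrix BigOperators
open scoped ComplexOrder

noncomputable section

/-! Take any decomposition `ρ = (1 - s) σ + s τ` with `σ` symmetric. Each branch splits as
`K_i ρ K_iᴴ = (1 - s) K_i σ K_iᴴ + s K_i τ K_iᴴ`, and by covariance the first summand is again
symmetric; normalizing both summands shows `p_i A_w(ρ_i) ≤ s Tr(K_i τ K_iᴴ)`. Summing over `i`,
trace preservation turns the right-hand side into `s`, and the infimum over `s` gives the claim.
If there is no symmetric state at all, every asymmetry weight is `sInf ∅ = 0`. -/

section Density

variable {n : Type*} [Fintype n]

lemma Matrix.PosSemidef.ofReal_trace_re {M : Matrix n n ℂ} (hM : M.PosSemidef) :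
    ((M.trace.re : ℝ) : ℂ) = M.trace :=
  (Complex.eq_re_of_ofReal_le (r := 0) (by rw [Complex.ofReal_zero]; exact hM.trace_nonneg)).symm

lemma Matrix.PosSemidef.trace_re_nonneg {M : Matrix n n ℂ} (hM : M.PosSemidef) :
    0 ≤ M.trace.re :=
  (Complex.nonneg_iff.mp hM.trace_nonneg).1

lemma Matrix.trace_sum_mul_mul_conjTranspose {R ι : Type*} [CommSemiring R] [StarRing R]
    [DecidableEq n] [Fintype ι] {K : ι → Matrix n n R} (hK : ∑ i, (K i)ᴴ * K i = 1)
    (X : Matrix n n R) :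
    ∑ i, (K i * X * (K i)ᴴ).trace = X.trace := by
  simp_rw [trace_mul_comm _ (K _)ᴴ, ← Matrix.mul_assoc, ← trace_sum, ← Finset.sum_mul, hK,
    Matrix.one_mul]

lemma Matrix.PosSemidef.exists_isDensity_eq_smul {P : Matrix n n ℂ → Prop}
    {M σ₀ : Matrix n n ℂ} (hM : M.PosSemidef) (hP : ∀ c : ℝ, P (c • M))
    (hσ₀ : IsDensity σ₀) (hPσ₀ : P σ₀) :
    ∃ σ, IsDensity σ ∧ P σ ∧ M = M.trace.re • σ := by
  by_cases htr : M.trace.re = 0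
  · have hM0 : M = 0 := by
      rw [← hM.trace_eq_zero_iff, ← hM.ofReal_trace_re, htr, Complex.ofReal_zero]
    exact ⟨σ₀, hσ₀, hPσ₀, by simp [hM0]⟩
  refine ⟨M.trace.re⁻¹ • M, ⟨hM.smul (inv_nonneg.mpr hM.trace_re_nonneg), ?_⟩, hP _, ?_⟩
  · rw [trace_smul, ← hM.ofReal_trace_re, Complex.ofReal_re, Complex.real_smul,
      ← Complex.ofReal_mul, inv_mul_cancel₀ htr, Complex.ofReal_one]
  · rw [smul_smul, mul_inv_cancel₀ htr, one_smul]

end Density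

section AsymmetryWeight

variable {d : ℕ} {G : Type*} [Group G] {U : G → Matrix (Fin d) (Fin d) ℂ}

lemma IsSymmetricState.smul {σ : Matrix (Fin d) (Fin d) ℂ} (hσ : IsSymmetricState U σ) (c : ℝ) :
    IsSymmetricState U (c • σ) := fun g => by
  rw [Matrix.mul_smul, Matrix.smul_mul, hσ g]

lemma asymWeight_le {ρ σ τ : Matrix (Fin d) (Fin d) ℂ} {s : ℝ} (hs : s ∈ Set.Icc (0 : ℝ) 1)
    (hσ : IsDensity σ) (hσsym : IsSymmetricState U σ) (hτ : IsDensity τ)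
    (hρ : ρ = (1 - s) • σ + s • τ) : asymWeight U ρ ≤ s :=
  csInf_le ⟨0, fun _ ht => ht.1.1⟩ ⟨hs, σ, τ, hσ, hσsym, hτ, hρ⟩

lemma le_asymWeight {ρ σ₀ : Matrix (Fin d) (Fin d) ℂ} {a : ℝ} (hσ₀ : IsDensity σ₀)
    (hσ₀sym : IsSymmetricState U σ₀) (hρ : IsDensity ρ)
    (h : ∀ s ∈ Set.Icc (0 : ℝ) 1, ∀ σ τ, IsDensity σ → IsSymmetricState U σ → IsDensity τ →
      ρ = (1 - s) • σ + s • τ → a ≤ s) :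
    a ≤ asymWeight U ρ :=
  le_csInf ⟨1, ⟨zero_le_one, le_rfl⟩, σ₀, ρ, hσ₀, hσ₀sym, hρ, by simp⟩
    fun _ ⟨hs, σ, τ, hσ, hσsym, hτ, hdec⟩ => h _ hs σ τ hσ hσsym hτ hdec

lemma asymWeight_eq_zero_of_not_exists_isSymmetricState
    (h : ¬ ∃ σ, IsDensity σ ∧ IsSymmetricState U σ) (ρ : Matrix (Fin d) (Fin d) ℂ) :
    asymWeight U ρ = 0 := by
  rw [asymWeight]
  convert Real.sInf_empty
  exact Set.eq_empty_of_forall_notMem fun s ⟨_, σ, _, hσ, hσsym, _⟩ => h ⟨σ, hσ, hσsym⟩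

lemma mul_asymWeight_le_trace_re {A B σ₀ : Matrix (Fin d) (Fin d) ℂ} (hA : A.PosSemidef)
    (hAsym : IsSymmetricState U A) (hB : B.PosSemidef) (hσ₀ : IsDensity σ₀)
    (hσ₀sym : IsSymmetricState U σ₀) (hp : 0 < (A + B).trace.re) :
    (A + B).trace.re * asymWeight U ((A + B).trace.re⁻¹ • (A + B)) ≤ B.trace.re := by
  obtain ⟨σ, hσ, hσsym, hAσ⟩ := hA.exists_isDensity_eq_smul hAsym.smul hσ₀ hσ₀sym
  obtain ⟨τ, hτ, -, hBτ⟩ := hB.exists_isDensity_eq_smul (P := fun _ => True)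
    (fun _ => trivial) hσ₀ trivial
  set a := A.trace.re
  set b := B.trace.re
  have hab : (A + B).trace.re = a + b := by rw [trace_add, Complex.add_re]
  rw [hab] at hp ⊢
  have ha : 0 ≤ a := hA.trace_re_nonneg
  have hb : 0 ≤ b := hB.trace_re_nonneg
  have hweight : asymWeight U ((a + b)⁻¹ • (A + B)) ≤ b / (a + b) := by
    refine asymWeight_le ⟨by positivity, (div_le_one hp).mpr (by linarith)⟩ hσ hσsym hτ ?_
    rw [hAσ, hBτ, smul_add, smul_smul, smul_smul, one_sub_div hp.ne', add_sub_cancel_right,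
      div_eq_inv_mul, div_eq_inv_mul]
  calc (a + b) * asymWeight U ((a + b)⁻¹ • (A + B)) ≤ (a + b) * (b / (a + b)) := by gcongr
    _ = b := mul_div_cancel₀ b hp.ne'

end AsymmetryWeight

theorem asymWeight_monotone_selective_covariant_general
    {d : ℕ} {G : Type*} [Group G]
    (U : G → Matrix (Fin d) (Fin d) ℂ)
    {ι : Type*} [Fintype ι] (K : ι → Matrix (Fin d) (Fin d) ℂ)
    (hK : ∑ i : ι, (K i)ᴴ * K i = 1)
    (hcov : ∀ (i : ι) (g : G) (X : Matrix (Fin d) (Fin d) ℂ),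
      K i * (U g * X * (U g)ᴴ) * (K i)ᴴ = U g * (K i * X * (K i)ᴴ) * (U g)ᴴ)
    (ρ : Matrix (Fin d) (Fin d) ℂ) (hρ : IsDensity ρ) :
    ∑ i ∈ Finset.univ.filter
        (fun i : ι => 0 < ((K i * ρ * (K i)ᴴ).trace).re),
      ((K i * ρ * (K i)ᴴ).trace).re *
        asymWeight U ((((K i * ρ * (K i)ᴴ).trace).re)⁻¹ • (K i * ρ * (K i)ᴴ))
      ≤ asymWeight U ρ := by
  by_cases hsym : ∃ σ₀, IsDensity σ₀ ∧ IsSymmetricState U σ₀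
  swap
  · simp [asymWeight_eq_zero_of_not_exists_isSymmetricState hsym]
  obtain ⟨σ₀, hσ₀, hσ₀sym⟩ := hsym
  refine le_asymWeight hσ₀ hσ₀sym hρ fun s hs σ τ hσ hσsym hτ hdec => ?_
  have hsplit : ∀ i, K i * ρ * (K i)ᴴ = (1 - s) • (K i * σ * (K i)ᴴ) + s • (K i * τ * (K i)ᴴ) :=
    fun i => by rw [hdec, Matrix.mul_add, Matrix.add_mul, Matrix.mul_smul, Matrix.mul_smul,
      Matrix.smul_mul, Matrix.smul_mul]
  have hKσsym : ∀ i, IsSymmetricState U ((1 - s) • (K i * σ * (K i)ᴴ)) :=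
    fun i => IsSymmetricState.smul (fun g => by rw [← hcov, hσsym g]) _
  simp only [hsplit]
  calc _ ≤ ∑ i ∈ _, (s • (K i * τ * (K i)ᴴ)).trace.re :=
        Finset.sum_le_sum fun i hi => mul_asymWeight_le_trace_re
          ((hσ.1.mul_mul_conjTranspose_same _).smul (by linarith [hs.2])) (hKσsym i)
          ((hτ.1.mul_mul_conjTranspose_same _).smul hs.1) hσ₀ hσ₀sym (Finset.mem_filter.mp hi).2
    _ ≤ ∑ i, (s • (K i * τ * (K i)ᴴ)).trace.re :=
        Finset.sum_le_sum_of_subset_of_nonneg (Finset.filter_subset _ _) fun i _ _ =>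
          ((hτ.1.mul_mul_conjTranspose_same _).smul hs.1).trace_re_nonneg
    _ = s := by
        rw [← Complex.re_sum, ← trace_sum, ← Finset.smul_sum, trace_smul, trace_sum,
          trace_sum_mul_mul_conjTranspose hK, hτ.2]
        simp

theorem asymWeight_monotone_selective_covariant
    {d : ℕ} {G : Type*} [Group G] [Fintype G]
    (U : G → Matrix (Fin d) (Fin d) ℂ)
    (hU : ∀ g, U g ∈ Matrix.unitaryGroup (Fin d) ℂ)
    (hUhom : ∀ g₁ g₂, U (g₁ * g₂) = U g₁ * U g₂)
    {ι : Type*} [Fintype ι] (K : ι → Matrix (Fin d) (Fin d) ℂ)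
    (hK : ∑ i : ι, (K i)ᴴ * K i = 1)
    (hcov : ∀ (i : ι) (g : G) (X : Matrix (Fin d) (Fin d) ℂ),
      K i * (U g * X * (U g)ᴴ) * (K i)ᴴ = U g * (K i * X * (K i)ᴴ) * (U g)ᴴ)
    (ρ : Matrix (Fin d) (Fin d) ℂ) (hρ : IsDensity ρ) :
    ∑ i ∈ Finset.univ.filter
        (fun i : ι => 0 < ((K i * ρ * (K i)ᴴ).trace).re),
      ((K i * ρ * (K i)ᴴ).trace).re *
        asymWeight U ((((K i * ρ * (K i)ᴴ).trace).re)⁻¹ • (K i * ρ * (K i)ᴴ))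
      ≤ asymWeight U ρ :=
  asymWeight_monotone_selective_covariant_general U K hK hcov ρ hρ
end
end

section
/- For every density matrix ρ on ℂ^d, A_w(ρ) ≥ ‖ρ − 𝒢(ρ)‖₂² / ‖ρ‖_∞ ≥ ‖ρ − 𝒢(ρ)‖₂², where ‖A‖₂² = Tr(A†A) is the squared Hilbert–Schmidt norm and ‖ρ‖_∞ is the largest eigenvalue of ρ. -/
open Matrix BigOperators
open scoped ComplexOrder

noncomputable section

/-- The group average (twirl) of a matrix. -/
noncomputable def groupAvg {d : ℕ} {G : Type*} [Group G] [Fintype G]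
    (U : G → Matrix (Fin d) (Fin d) ℂ) (X : Matrix (Fin d) (Fin d) ℂ) :
    Matrix (Fin d) (Fin d) ℂ :=
  ((Fintype.card G : ℝ)⁻¹) • ∑ g : G, U g * X * (U g)ᴴ

/-- The largest eigenvalue of a matrix (for a density matrix this is `‖ρ‖_∞`). -/
noncomputable def maxEigenvalue {n : Type*} [Fintype n] (A : Matrix n n ℂ) : ℝ :=
  sSup {r : ℝ | ∃ v : n → ℂ, v ≠ 0 ∧ A.mulVec v = (r : ℂ) • v}

/-! If `ρ = (1 - s) σ + s τ` with `σ` symmetric, then `ρ - 𝒢 ρ = s (τ - 𝒢 τ)`. The twirl `𝒢`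
is the Hilbert–Schmidt orthogonal projection onto the symmetric matrices, so
`‖τ - 𝒢 τ‖₂² ≤ Tr (τ τ)`. In the Loewner order `s τ ≤ ρ ≤ ‖ρ‖_∞`, and `A ↦ Tr (A C)` is
monotone for `C ≥ 0`; hence `s² Tr (τ τ) ≤ s Tr (ρ τ) ≤ s ‖ρ‖_∞`. Taking the infimum over
admissible `s` gives the first inequality; the second is `‖ρ‖_∞ ≤ Tr ρ = 1`. -/

open scoped MatrixOrder

namespace Matrix

section RCLike

variable {𝕜 n : Type*} [RCLike 𝕜] [Fintype n]

lemma PosSemidef.trace_mul_nonneg {A B : Matrix n n 𝕜} (hA : A.PosSemidef) (hB : B.PosSemidef) :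
    0 ≤ (A * B).trace := by
  classical
  have hA_nonneg : 0 ≤ A := hA.nonneg
  have hS : (CFC.sqrt A)ᴴ = CFC.sqrt A := (CFC.sqrt_nonneg A).isSelfAdjoint
  calc 0 ≤ (CFC.sqrt A * B * (CFC.sqrt A)ᴴ).trace :=
        (hB.mul_mul_conjTranspose_same _).trace_nonneg
    _ = (A * B).trace := by rw [hS, trace_mul_cycle, CFC.sqrt_mul_sqrt_self A]

lemma re_trace_mul_le_of_le {A B C : Matrix n n 𝕜} (hAB : A ≤ B) (hC : C.PosSemidef) :
    RCLike.re (A * C).trace ≤ RCLike.re (B * C).trace := by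
  have h := RCLike.nonneg_iff.mp (PosSemidef.trace_mul_nonneg hAB hC) |>.1
  rw [sub_mul, trace_sub, map_sub] at h
  linarith

lemma re_trace_conjTranspose_mul_self_nonneg (A : Matrix n n 𝕜) :
    0 ≤ RCLike.re (Aᴴ * A).trace :=
  (RCLike.nonneg_iff.mp (posSemidef_conjTranspose_mul_self A).trace_nonneg).1

end RCLike

variable {n : Type*} [Fintype n] [DecidableEq n]

lemma mem_spectrum_real_iff_exists_mulVec_eq_smul {A : Matrix n n ℂ} {r : ℝ} :
    r ∈ spectrum ℝ A ↔ ∃ v : n → ℂ, v ≠ 0 ∧ A *ᵥ v = (r : ℂ) • v := by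
  rw [spectrum.mem_iff, isUnit_iff_isUnit_det, isUnit_iff_ne_zero, not_not,
    ← exists_mulVec_eq_zero_iff]
  simp only [sub_mulVec, sub_eq_zero, Algebra.algebraMap_eq_smul_one, smul_mulVec, one_mulVec,
    eq_comm (a := _ • _), Complex.coe_smul]

lemma maxEigenvalue_eq_sSup_spectrum (A : Matrix n n ℂ) :
    maxEigenvalue A = sSup (spectrum ℝ A) := by
  simp only [maxEigenvalue, ← mem_spectrum_real_iff_exists_mulVec_eq_smul, Set.ofPred_mem_eq]

lemma IsHermitian.le_algebraMap_maxEigenvalue {A : Matrix n n ℂ} (hA : A.IsHermitian) :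
    A ≤ algebraMap ℝ _ (maxEigenvalue A) :=
  le_algebraMap_of_spectrum_le
    (fun _ hr => maxEigenvalue_eq_sSup_spectrum A ▸ le_csSup A.finite_real_spectrum.bddAbove hr)
    hA.isSelfAdjoint

end Matrix

namespace IsDensity

variable {n : Type*} [Fintype n] {ρ : Matrix n n ℂ}

lemma nonempty_s4 (hρ : IsDensity ρ) : Nonempty n := by
  by_contra h
  rw [not_nonempty_iff] at h
  simpa [Matrix.trace] using hρ.2

variable [DecidableEq n]

lemma sum_eigenvalues (hρ : IsDensity ρ) : ∑ i, hρ.1.1.eigenvalues i = 1 := by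
  have h := hρ.1.1.trace_eq_sum_eigenvalues.symm.trans hρ.2
  rw [← RCLike.ofReal_sum] at h
  exact RCLike.ofReal_injective (h.trans RCLike.ofReal_one.symm)

lemma eigenvalues_le_one (hρ : IsDensity ρ) (i : n) : hρ.1.1.eigenvalues i ≤ 1 :=
  hρ.sum_eigenvalues ▸
    Finset.single_le_sum (fun j _ => hρ.1.eigenvalues_nonneg j) (Finset.mem_univ i)

lemma maxEigenvalue_le_one (hρ : IsDensity ρ) : maxEigenvalue ρ ≤ 1 := by
  have := hρ.nonempty_s4
  rw [Matrix.maxEigenvalue_eq_sSup_spectrum, hρ.1.1.spectrum_real_eq_range_eigenvalues]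
  exact csSup_le (Set.range_nonempty _) (Set.forall_mem_range.mpr hρ.eigenvalues_le_one)

lemma maxEigenvalue_pos (hρ : IsDensity ρ) : 0 < maxEigenvalue ρ := by
  obtain ⟨i, -, hi⟩ : ∃ i ∈ Finset.univ, (0 : ℝ) < hρ.1.1.eigenvalues i :=
    Finset.exists_lt_of_sum_lt (by simp [hρ.sum_eigenvalues])
  rw [Matrix.maxEigenvalue_eq_sSup_spectrum, hρ.1.1.spectrum_real_eq_range_eigenvalues]
  exact hi.trans_le (le_csSup (Set.finite_range _).bddAbove (Set.mem_range_self i))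

lemma re_trace_mul_le_maxEigenvalue {A τ : Matrix n n ℂ} (hA : A.IsHermitian)
    (hτ : IsDensity τ) :
    (A * τ).trace.re ≤ maxEigenvalue A := by
  calc (A * τ).trace.re ≤ (algebraMap ℝ _ (maxEigenvalue A) * τ).trace.re :=
        Matrix.re_trace_mul_le_of_le hA.le_algebraMap_maxEigenvalue hτ.1
    _ = maxEigenvalue A := by
        simp [Algebra.algebraMap_eq_smul_one, Matrix.trace_smul, hτ.2]

end IsDensity

lemma isDensity_algebraMap_inv_card {n : Type*} [Fintype n] [DecidableEq n] [Nonempty n] :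
    IsDensity (algebraMap ℝ (Matrix n n ℂ) (Fintype.card n : ℝ)⁻¹) := by
  rw [Algebra.algebraMap_eq_smul_one]
  refine ⟨Matrix.PosSemidef.one.smul (by positivity), ?_⟩
  rw [Matrix.trace_smul, Matrix.trace_one, Complex.real_smul]
  push_cast
  exact inv_mul_cancel₀ (Nat.cast_ne_zero.mpr Fintype.card_ne_zero)

section GroupAverage

variable {d : ℕ} {G : Type*} [Group G] {U : G → Matrix (Fin d) (Fin d) ℂ}

lemma isSymmetricState_algebraMap (hU : ∀ g, U g ∈ unitaryGroup (Fin d) ℂ) (r : ℝ) :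
    IsSymmetricState U (algebraMap ℝ _ r) := fun g => by
  rw [Algebra.algebraMap_eq_smul_one, Matrix.mul_smul, Matrix.smul_mul, Matrix.mul_one,
    ← star_eq_conjTranspose, mem_unitaryGroup_iff.mp (hU g)]

variable [Fintype G]

lemma inv_card_smul_sum_const {M : Type*} [AddCommGroup M] [Module ℝ M] (x : M) :
    (Fintype.card G : ℝ)⁻¹ • ∑ _g : G, x = x := by
  rw [Finset.sum_const, Finset.card_univ, ← Nat.cast_smul_eq_nsmul ℝ, smul_smul,
    inv_mul_cancel₀ (Nat.cast_ne_zero.mpr Fintype.card_ne_zero), one_smul]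

lemma groupAvg_add (X Y : Matrix (Fin d) (Fin d) ℂ) :
    groupAvg U (X + Y) = groupAvg U X + groupAvg U Y := by
  simp only [groupAvg, Matrix.mul_add, Matrix.add_mul, Finset.sum_add_distrib, smul_add]

lemma groupAvg_smul (a : ℝ) (X : Matrix (Fin d) (Fin d) ℂ) :
    groupAvg U (a • X) = a • groupAvg U X := by
  simp only [groupAvg, Matrix.smul_mul, Matrix.mul_smul, ← Finset.smul_sum, smul_comm a]

lemma conjTranspose_groupAvg (X : Matrix (Fin d) (Fin d) ℂ) :
    (groupAvg U X)ᴴ = groupAvg U Xᴴ := by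
  simp only [groupAvg, conjTranspose_smul, star_trivial, conjTranspose_sum, conjTranspose_mul,
    conjTranspose_conjTranspose, Matrix.mul_assoc]

lemma groupAvg_of_isSymmetricState {σ : Matrix (Fin d) (Fin d) ℂ} (hσ : IsSymmetricState U σ) :
    groupAvg U σ = σ := by
  rw [groupAvg, Finset.sum_congr rfl fun g _ => hσ g, inv_card_smul_sum_const]

lemma isSymmetricState_groupAvg (hUhom : ∀ g₁ g₂, U (g₁ * g₂) = U g₁ * U g₂)
    (X : Matrix (Fin d) (Fin d) ℂ) : IsSymmetricState U (groupAvg U X) := by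
  intro h
  rw [groupAvg, Matrix.mul_smul, Matrix.smul_mul, Matrix.mul_sum, Finset.sum_mul]
  congr 1
  refine Fintype.sum_equiv (Equiv.mulLeft h) _ _ fun g => ?_
  simp only [Equiv.coe_mulLeft, hUhom, conjTranspose_mul, Matrix.mul_assoc]

lemma trace_groupAvg_mul (hU : ∀ g, U g ∈ unitaryGroup (Fin d) ℂ)
    (X : Matrix (Fin d) (Fin d) ℂ) {σ : Matrix (Fin d) (Fin d) ℂ}
    (hσ : IsSymmetricState U σ) :
    (groupAvg U X * σ).trace = (X * σ).trace := by
  have hconj (g : G) : (U g)ᴴ * σ * U g = σ := by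
    have hUU : (U g)ᴴ * U g = 1 := mem_unitaryGroup_iff'.mp (hU g)
    calc (U g)ᴴ * σ * U g = ((U g)ᴴ * U g) * σ * ((U g)ᴴ * U g) := by
          conv_lhs => rw [← hσ g]
          simp only [Matrix.mul_assoc]
      _ = σ := by rw [hUU, Matrix.one_mul, Matrix.mul_one]
  have hterm (g : G) : (U g * X * (U g)ᴴ * σ).trace = (X * σ).trace := by
    rw [show U g * X * (U g)ᴴ * σ = U g * (X * ((U g)ᴴ * σ)) by simp only [Matrix.mul_assoc],
      trace_mul_comm, Matrix.mul_assoc, hconj]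
  rw [groupAvg, Matrix.smul_mul, trace_smul, Finset.sum_mul, trace_sum,
    Finset.sum_congr rfl fun g _ => hterm g, inv_card_smul_sum_const]

lemma trace_sub_groupAvg_sq (hU : ∀ g, U g ∈ unitaryGroup (Fin d) ℂ)
    (hUhom : ∀ g₁ g₂, U (g₁ * g₂) = U g₁ * U g₂) (X : Matrix (Fin d) (Fin d) ℂ) :
    ((X - groupAvg U X)ᴴ * (X - groupAvg U X)).trace
      = (Xᴴ * X).trace - ((groupAvg U X)ᴴ * groupAvg U X).trace := by
  set Q := groupAvg U X
  have hQ : IsSymmetricState U Q := isSymmetricState_groupAvg hUhom X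
  have hQstar : IsSymmetricState U Qᴴ :=
    conjTranspose_groupAvg (U := U) X ▸ isSymmetricState_groupAvg hUhom Xᴴ
  have h₁ : (Xᴴ * Q).trace = (Qᴴ * Q).trace := by
    rw [← trace_groupAvg_mul hU Xᴴ hQ, ← conjTranspose_groupAvg (U := U)]
  have h₂ : (Qᴴ * X).trace = (Qᴴ * Q).trace := by
    rw [trace_mul_comm, ← trace_groupAvg_mul hU X hQstar, trace_mul_comm]
  rw [conjTranspose_sub, Matrix.sub_mul, Matrix.mul_sub, Matrix.mul_sub, trace_sub, trace_sub,
    trace_sub, h₁, h₂]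
  ring

lemma re_trace_sub_groupAvg_sq_le (hU : ∀ g, U g ∈ unitaryGroup (Fin d) ℂ)
    (hUhom : ∀ g₁ g₂, U (g₁ * g₂) = U g₁ * U g₂) (X : Matrix (Fin d) (Fin d) ℂ) :
    ((X - groupAvg U X)ᴴ * (X - groupAvg U X)).trace.re ≤ (Xᴴ * X).trace.re := by
  rw [trace_sub_groupAvg_sq hU hUhom X, Complex.sub_re, sub_le_self_iff]
  exact Matrix.re_trace_conjTranspose_mul_self_nonneg (groupAvg U X)

lemma sub_groupAvg_of_eq_add_smul {ρ σ τ : Matrix (Fin d) (Fin d) ℂ} {s : ℝ}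
    (hσ : IsSymmetricState U σ) (h : ρ = (1 - s) • σ + s • τ) :
    ρ - groupAvg U ρ = s • (τ - groupAvg U τ) := by
  rw [h, groupAvg_add, groupAvg_smul, groupAvg_smul, groupAvg_of_isSymmetricState hσ]
  module

lemma re_trace_sub_groupAvg_sq_le_mul_maxEigenvalue (hU : ∀ g, U g ∈ unitaryGroup (Fin d) ℂ)
    (hUhom : ∀ g₁ g₂, U (g₁ * g₂) = U g₁ * U g₂)
    {ρ σ τ : Matrix (Fin d) (Fin d) ℂ} {s : ℝ} (hs : s ∈ Set.Icc (0 : ℝ) 1)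
    (hσ : IsDensity σ) (hσsymm : IsSymmetricState U σ) (hτ : IsDensity τ)
    (h : ρ = (1 - s) • σ + s • τ) :
    ((ρ - groupAvg U ρ)ᴴ * (ρ - groupAvg U ρ)).trace.re ≤ s * maxEigenvalue ρ := by
  have hσs : ((1 - s) • σ).PosSemidef := hσ.1.smul (sub_nonneg.mpr hs.2)
  have hρ : ρ.IsHermitian := h ▸ (hσs.add (hτ.1.smul hs.1)).1
  have hsτ : s • τ ≤ ρ := by rwa [Matrix.le_iff, h, add_sub_cancel_right]
  calc ((ρ - groupAvg U ρ)ᴴ * (ρ - groupAvg U ρ)).trace.re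
      = s ^ 2 * ((τ - groupAvg U τ)ᴴ * (τ - groupAvg U τ)).trace.re := by
        rw [sub_groupAvg_of_eq_add_smul hσsymm h]
        simp [Matrix.trace_smul, smul_smul, sq]
    _ ≤ s ^ 2 * (τᴴ * τ).trace.re :=
        mul_le_mul_of_nonneg_left (re_trace_sub_groupAvg_sq_le hU hUhom τ) (sq_nonneg s)
    _ = s * ((s • τ) * τ).trace.re := by
        rw [hτ.1.1.eq, Matrix.smul_mul, Matrix.trace_smul, Complex.smul_re, smul_eq_mul]; ring
    _ ≤ s * (ρ * τ).trace.re :=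
        mul_le_mul_of_nonneg_left (Matrix.re_trace_mul_le_of_le hsτ hτ.1) hs.1
    _ ≤ s * maxEigenvalue ρ :=
        mul_le_mul_of_nonneg_left (hτ.re_trace_mul_le_maxEigenvalue hρ) hs.1

end GroupAverage

theorem asymWeight_ge_HS_distance
    {d : ℕ} {G : Type*} [Group G] [Fintype G]
    (U : G → Matrix (Fin d) (Fin d) ℂ)
    (hU : ∀ g, U g ∈ Matrix.unitaryGroup (Fin d) ℂ)
    (hUhom : ∀ g₁ g₂, U (g₁ * g₂) = U g₁ * U g₂)
    (ρ : Matrix (Fin d) (Fin d) ℂ) (hρ : IsDensity ρ) :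
    asymWeight U ρ ≥
      (((ρ - groupAvg U ρ)ᴴ * (ρ - groupAvg U ρ)).trace).re / maxEigenvalue ρ ∧
    (((ρ - groupAvg U ρ)ᴴ * (ρ - groupAvg U ρ)).trace).re / maxEigenvalue ρ ≥
      (((ρ - groupAvg U ρ)ᴴ * (ρ - groupAvg U ρ)).trace).re := by
  have hM := hρ.maxEigenvalue_pos
  have : Nonempty (Fin d) := hρ.nonempty_s4
  refine ⟨le_csInf ⟨1, ⟨zero_le_one, le_rfl⟩, _, ρ, isDensity_algebraMap_inv_card,
    isSymmetricState_algebraMap hU _, hρ, by simp⟩ ?_, ?_⟩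
  · rintro s ⟨hs, σ, τ, hσ, hσsymm, hτ, h⟩
    rw [div_le_iff₀ hM]
    exact re_trace_sub_groupAvg_sq_le_mul_maxEigenvalue hU hUhom hs hσ hσsymm hτ h
  · rw [ge_iff_le, le_div_iff₀ hM]
    exact mul_le_of_le_one_right
      (Matrix.re_trace_conjTranspose_mul_self_nonneg (ρ - groupAvg U ρ)) hρ.maxEigenvalue_le_one
end
end

section
/- Let {K_i}_{i∈I} (I finite) be d×d complex matrices with Σ_i K_i† K_i = I such that each K_i is incoherence-preserving: for every diagonal positive semidefinite matrix σ, the matrix K_i σ K_i† is diagonal. Then for every density matrix ρ on ℂ^d, C_w(ρ) ≥ Σ_{i : p_i > 0} p_i · C_w(ρ_i), where p_i = Tr(K_i ρ K_i†) and ρ_i = K_i ρ K_i† / p_i. -/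
open Matrix BigOperators
open scoped ComplexOrder

noncomputable section

/-- A matrix is incoherent if it is diagonal in the fixed (standard) basis. -/
def IsIncoherent {n : Type*} (σ : Matrix n n ℂ) : Prop :=
  ∀ i j, i ≠ j → σ i j = 0

/-- The coherence weight of a state `ρ`. -/
noncomputable def cohWeight {n : Type*} [Fintype n] (ρ : Matrix n n ℂ) : ℝ :=
  sInf {s : ℝ | s ∈ Set.Icc (0 : ℝ) 1 ∧
    ∃ σ τ : Matrix n n ℂ,
      IsDensity σ ∧ IsIncoherent σ ∧ IsDensity τ ∧
      ρ = (1 - s) • σ + s • τ}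

/-!
Push an admissible decomposition `ρ = (1 - s) σ + s τ` through each Kraus operator:
`K i ρ (K i)ᴴ = (1 - s) K i σ (K i)ᴴ + s K i τ (K i)ᴴ`, whose first summand is still incoherent.
After normalisation this gives `p i * C_w(ρ i) ≤ s * Tr (K i τ (K i)ᴴ)`, and by the completeness
relation these traces add up to `Tr τ = 1`; taking the infimum over `s` gives the bound.
-/

namespace Matrix.PosSemidef

variable {n : Type*} [Fintype n] {A : Matrix n n ℂ}

lemma re_trace_nonneg (hA : A.PosSemidef) : 0 ≤ A.trace.re :=
  (Complex.nonneg_iff.mp hA.trace_nonneg).1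

lemma ofReal_re_trace (hA : A.PosSemidef) : (A.trace.re : ℂ) = A.trace :=
  (Complex.eq_re_of_ofReal_le (r := 0) (by simpa using hA.trace_nonneg)).symm

lemma eq_zero_of_re_trace_eq_zero (hA : A.PosSemidef) (h : A.trace.re = 0) : A = 0 :=
  hA.trace_eq_zero_iff.mp (by rw [← hA.ofReal_re_trace, h, Complex.ofReal_zero])

end Matrix.PosSemidef

lemma sum_trace_mul_mul_conjTranspose {n ι : Type*} [Fintype n] [DecidableEq n] [Fintype ι]
    {K : ι → Matrix n n ℂ} (hK : ∑ i, (K i)ᴴ * K i = 1) (X : Matrix n n ℂ) :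
    ∑ i, (K i * X * (K i)ᴴ).trace = X.trace := by
  simp_rw [trace_mul_cycle _ X, ← trace_sum, ← Finset.sum_mul, hK, one_mul]

section

variable {n : Type*}

lemma IsIncoherent.smul {A : Matrix n n ℂ} (hA : IsIncoherent A) (c : ℝ) :
    IsIncoherent (c • A) := fun i j hij => by
  rw [Matrix.smul_apply, hA i j hij, smul_zero]

lemma isIncoherent_diagonal [DecidableEq n] (d : n → ℂ) : IsIncoherent (diagonal d) :=
  fun _ _ => diagonal_apply_ne d

variable [Fintype n]

lemma IsDensity.diagonal_diag [DecidableEq n] {ρ : Matrix n n ℂ} (hρ : IsDensity ρ) :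
    IsDensity (diagonal ρ.diag) :=
  ⟨posSemidef_diagonal_iff.mpr fun _ => hρ.1.diag_nonneg, by rw [trace_diagonal]; exact hρ.2⟩

lemma isDensity_inv_re_trace_smul {A : Matrix n n ℂ} (hA : A.PosSemidef) (h : 0 < A.trace.re) :
    IsDensity (A.trace.re⁻¹ • A) := by
  refine ⟨hA.smul (inv_nonneg.mpr h.le), ?_⟩
  rw [trace_smul, Complex.real_smul, ← Complex.ofReal_one, ← inv_mul_cancel₀ h.ne',
    Complex.ofReal_mul, hA.ofReal_re_trace]

lemma cohWeight_le_of_eq {ρ σ τ : Matrix n n ℂ} {s : ℝ} (hs0 : 0 ≤ s) (hs1 : s ≤ 1)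
    (hσ : IsDensity σ) (hσi : IsIncoherent σ) (hτ : IsDensity τ)
    (hρ : ρ = (1 - s) • σ + s • τ) : cohWeight ρ ≤ s :=
  csInf_le ⟨0, fun _ hx => hx.1.1⟩ ⟨⟨hs0, hs1⟩, σ, τ, hσ, hσi, hτ, hρ⟩

lemma cohWeight_le_one [DecidableEq n] {ρ : Matrix n n ℂ} (hρ : IsDensity ρ) : cohWeight ρ ≤ 1 :=
  cohWeight_le_of_eq zero_le_one le_rfl hρ.diagonal_diag (isIncoherent_diagonal _) hρ (by simp)

lemma cohWeight_nonpos_of_isIncoherent {ρ : Matrix n n ℂ} (hρ : IsDensity ρ)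
    (hρi : IsIncoherent ρ) : cohWeight ρ ≤ 0 :=
  cohWeight_le_of_eq le_rfl zero_le_one hρ hρi hρ (by simp)

lemma le_cohWeight [DecidableEq n] {ρ : Matrix n n ℂ} (hρ : IsDensity ρ) {b : ℝ}
    (h : ∀ (s : ℝ) (σ τ : Matrix n n ℂ), 0 ≤ s → s ≤ 1 → IsDensity σ → IsIncoherent σ →
      IsDensity τ → ρ = (1 - s) • σ + s • τ → b ≤ s) :
    b ≤ cohWeight ρ :=
  le_csInf ⟨1, ⟨zero_le_one, le_rfl⟩, _, ρ, hρ.diagonal_diag, isIncoherent_diagonal _, hρ, by simp⟩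
    fun _ ⟨⟨hs0, hs1⟩, _, _, hσ, hσi, hτ, hdec⟩ => h _ _ _ hs0 hs1 hσ hσi hτ hdec

lemma re_trace_mul_cohWeight_le [DecidableEq n] {M A B : Matrix n n ℂ} (hA : A.PosSemidef)
    (hAi : IsIncoherent A) (hB : B.PosSemidef) (hM : M = A + B) (hpos : 0 < M.trace.re) :
    M.trace.re * cohWeight (M.trace.re⁻¹ • M) ≤ B.trace.re := by
  have hm : M.trace.re = A.trace.re + B.trace.re := by rw [hM, trace_add, Complex.add_re]
  set m := M.trace.re
  have hρ : IsDensity (m⁻¹ • M) := isDensity_inv_re_trace_smul (hM ▸ hA.add hB) hpos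
  rcases hB.re_trace_nonneg.eq_or_lt with hb | hb
  · have hAM : M = A := by rw [hM, hB.eq_zero_of_re_trace_eq_zero hb.symm, add_zero]
    have := cohWeight_nonpos_of_isIncoherent hρ (hAM ▸ hAi.smul _)
    nlinarith
  rcases hA.re_trace_nonneg.eq_or_lt with ha | ha
  · nlinarith [cohWeight_le_one hρ]
  have hcw : cohWeight (m⁻¹ • M) ≤ B.trace.re / m := by
    refine cohWeight_le_of_eq (by positivity) ((div_le_one hpos).mpr (by linarith))
      (isDensity_inv_re_trace_smul hA ha) (hAi.smul _) (isDensity_inv_re_trace_smul hB hb) ?_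
    rw [hM, smul_add, smul_smul, smul_smul]
    congr 2
    · field_simp
      linarith
    · field_simp
  calc m * cohWeight (m⁻¹ • M) ≤ m * (B.trace.re / m) := by gcongr
    _ = B.trace.re := by field_simp

end

theorem cohWeight_monotone_incoherent_operation {d : ℕ}
    {ι : Type*} [Fintype ι] (K : ι → Matrix (Fin d) (Fin d) ℂ)
    (hK : ∑ i : ι, (K i)ᴴ * K i = 1)
    (hinc : ∀ (i : ι) (σ : Matrix (Fin d) (Fin d) ℂ),
      σ.PosSemidef → IsIncoherent σ → IsIncoherent (K i * σ * (K i)ᴴ))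
    (ρ : Matrix (Fin d) (Fin d) ℂ) (hρ : IsDensity ρ) :
    ∑ i ∈ Finset.univ.filter
        (fun i : ι => 0 < ((K i * ρ * (K i)ᴴ).trace).re),
      ((K i * ρ * (K i)ᴴ).trace).re *
        cohWeight ((((K i * ρ * (K i)ᴴ).trace).re)⁻¹ • (K i * ρ * (K i)ᴴ))
      ≤ cohWeight ρ := by
  refine le_cohWeight hρ fun s σ τ hs0 hs1 hσ hσi hτ hρσ => ?_
  set r : ι → ℝ := fun i => (K i * τ * (K i)ᴴ).trace.re
  have hbound : ∀ i, 0 < (K i * ρ * (K i)ᴴ).trace.re →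
      (K i * ρ * (K i)ᴴ).trace.re * cohWeight ((K i * ρ * (K i)ᴴ).trace.re⁻¹ • (K i * ρ * (K i)ᴴ))
        ≤ s * r i := fun i hi => by
    have := re_trace_mul_cohWeight_le
      ((hσ.1.mul_mul_conjTranspose_same (K i)).smul (sub_nonneg.mpr hs1))
      ((hinc i σ hσ.1 hσi).smul (1 - s)) ((hτ.1.mul_mul_conjTranspose_same (K i)).smul hs0)
      (by rw [hρσ, Matrix.mul_add, Matrix.add_mul, Matrix.mul_smul, Matrix.smul_mul,
        Matrix.mul_smul, Matrix.smul_mul]) hi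
    simpa [trace_smul, r] using this
  calc _ ≤ ∑ i ∈ Finset.univ.filter (fun i : ι => 0 < ((K i * ρ * (K i)ᴴ).trace).re), s * r i :=
        Finset.sum_le_sum fun i hi => hbound i (Finset.mem_filter.mp hi).2
    _ ≤ ∑ i, s * r i := Finset.sum_le_sum_of_subset_of_nonneg (Finset.filter_subset _ _)
        fun i _ _ => mul_nonneg hs0 (hτ.1.mul_mul_conjTranspose_same (K i)).re_trace_nonneg
    _ = s := by
        rw [← Finset.mul_sum, ← Complex.re_sum, sum_trace_mul_mul_conjTranspose hK, hτ.2,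
          Complex.one_re, mul_one]
end
end

section
/- Let d ≥ 2 and α ∈ [0,1]. The d-dimensional Werner state ρ_W(α) = α(I − F)/(d(d−1)) + (1−α)I/d², a density matrix on ℂ^d ⊗ ℂ^d (indices in {0,…,d−1}×{0,…,d−1}) where F = Σ_{i,j} |ij⟩⟨ji| is the swap matrix, satisfies C_w(ρ_W(α)) = C_R(ρ_W(α)) = C_{l₁}(ρ_W(α)) = α, where coherence is measured in the product standard basis {|ij⟩}. -/
open Matrix BigOperators
open scoped ComplexOrder

noncomputable section

/-- The robustness of coherence. -/
noncomputable def cohRobustness {n : Type*} [Fintype n] (ρ : Matrix n n ℂ) : ℝ :=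
  sInf {s : ℝ | 0 ≤ s ∧ ∃ τ : Matrix n n ℂ, IsDensity τ ∧
    IsIncoherent ((1 + s)⁻¹ • (ρ + s • τ))}

/-- The `l₁` norm of coherence: sum of absolute values of off-diagonal entries. -/
noncomputable def Cl1 {n : Type*} [Fintype n] [DecidableEq n] (ρ : Matrix n n ℂ) : ℝ :=
  ∑ i : n, ∑ j : n, if i = j then 0 else ‖ρ i j‖

/-- The swap operator `F = ∑ |ij⟩⟨ji|` on `ℂ^d ⊗ ℂ^d`. -/
def swapMatrix (d : ℕ) : Matrix (Fin d × Fin d) (Fin d × Fin d) ℂ :=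
  Matrix.of fun p q => if p.1 = q.2 ∧ p.2 = q.1 then 1 else 0

/-- The `d`-dimensional Werner state `ρ_W(α) = α (I - F)/(d(d-1)) + (1-α) I/d²`. -/
noncomputable def wernerState (d : ℕ) (α : ℝ) :
    Matrix (Fin d × Fin d) (Fin d × Fin d) ℂ :=
  (α / ((d : ℝ) * ((d : ℝ) - 1))) • ((1 : Matrix (Fin d × Fin d) (Fin d × Fin d) ℂ) - swapMatrix d)
    + ((1 - α) / ((d : ℝ) ^ 2)) • (1 : Matrix (Fin d × Fin d) (Fin d × Fin d) ℂ)


/-!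
Off the diagonal, `ρ_W(α)` has the entry `-α/(d(d-1))` at each of the `d(d-1)` positions
`(ij, ji)` with `i ≠ j` and vanishes elsewhere, so `C_{l₁} = α`. When the off-diagonal support of
`ρ` lies on the graph of a permutation `σ`, a decomposition `ρ = (1-s)σ₀ + sτ`, or an incoherent
`ρ + sτ`, forces `|ρ_{p,σp}| = s|τ_{p,σp}|`; since `2|τ_{pq}| ≤ τ_{pp} + τ_{qq}` for a density
matrix, `∑_p |τ_{p,σp}| ≤ tr τ = 1`, so both `C_w` and `C_R` are at least `C_{l₁}`.
Equality is attained by `ρ_W(α) = (1-α) I/d² + α (I-F)/(d(d-1))` for the weight, and for the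
robustness by `τ = P(I+F)P/(d(d-1))`, `P` the projection onto the span of the `|ij⟩` with `i ≠ j`,
whose off-diagonal part is `F/(d(d-1))`.
-/

namespace Matrix.PosSemidef

variable {n 𝕜 : Type*} [Fintype n] [RCLike 𝕜] {A : Matrix n n 𝕜}

lemma two_mul_norm_apply_le (hA : A.PosSemidef) (i j : n) :
    2 * ‖A i j‖ ≤ RCLike.re (A i i) + RCLike.re (A j j) := by
  classical
  -- test vector `e_i - c e_j` with `c * A i j = ‖A i j‖` (`c = 0` when `A i j = 0`)
  set c : 𝕜 := star (A i j) / ‖A i j‖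
  have hcA : c * A i j = ‖A i j‖ := by
    rcases eq_or_ne (A i j) 0 with h | h
    · simp [c, h]
    · have : (‖A i j‖ : 𝕜) ≠ 0 := by exact_mod_cast norm_ne_zero_iff.mpr h
      rw [div_mul_eq_mul_div, RCLike.star_def, RCLike.conj_mul]
      field_simp
  have hc : ‖c‖ ≤ 1 := by
    simp only [c, norm_div, norm_star, RCLike.norm_ofReal, abs_norm]
    exact div_self_le_one _
  have hji : A j i = star (A i j) := (hA.1.apply j i).symm
  have hquad := hA.re_dotProduct_nonneg (Pi.single i 1 - c • Pi.single j 1)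
  have hexp : star (Pi.single i 1 - c • Pi.single j 1) ⬝ᵥ A *ᵥ (Pi.single i 1 - c • Pi.single j 1)
      = A i i - c * A i j - star (c * A i j) + star c * c * A j j := by
    simp [sub_dotProduct, dotProduct_sub, mulVec_sub, mulVec_smul, dotProduct_smul, hji]
    ring
  have hjj : 0 ≤ RCLike.re (A j j) := (RCLike.nonneg_iff.mp hA.diag_nonneg).1
  rw [hexp, hcA, RCLike.star_def, RCLike.conj_ofReal, RCLike.conj_mul] at hquad
  simp only [map_add, map_sub, RCLike.ofReal_re, ← RCLike.ofReal_pow, RCLike.re_ofReal_mul] at hquad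
  nlinarith [mul_le_of_le_one_left hjj (pow_le_one₀ (n := 2) (norm_nonneg c) hc)]

lemma sum_norm_apply_perm_le (hA : A.PosSemidef) (σ : Equiv.Perm n) :
    ∑ i, ‖A i (σ i)‖ ≤ RCLike.re A.trace := by
  calc ∑ i, ‖A i (σ i)‖
      ≤ ∑ i, (RCLike.re (A i i) + RCLike.re (A (σ i) (σ i))) / 2 :=
        Finset.sum_le_sum fun i _ => by linarith [hA.two_mul_norm_apply_le i (σ i)]
    _ = RCLike.re A.trace := by
        rw [← Finset.sum_div, Finset.sum_add_distrib,
          Equiv.sum_comp σ fun i => RCLike.re (A i i), trace, map_sum]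
        simp only [diag_apply]
        ring

end Matrix.PosSemidef

lemma Matrix.IsHermitian.posSemidef_one_sub_of_mul_self_eq_one {n 𝕜 : Type*} [Fintype n]
    [DecidableEq n] [RCLike 𝕜] {U : Matrix n n 𝕜} (hU : U.IsHermitian) (hUU : U * U = 1) :
    (1 - U).PosSemidef := by
  have hsq : (1 - U)ᴴ * (1 - U) = (2 : ℝ) • (1 - U) := by
    rw [conjTranspose_sub, conjTranspose_one, hU.eq, two_smul]
    noncomm_ring [hUU]
  have h := posSemidef_conjTranspose_mul_self (1 - U)
  rw [hsq] at h
  simpa [smul_smul] using h.smul (inv_nonneg.mpr (zero_le_two : (0 : ℝ) ≤ 2))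

lemma isIncoherent_smul_one {n : Type*} [DecidableEq n] (c : ℝ) :
    IsIncoherent (c • (1 : Matrix n n ℂ)) :=
  fun i j hij => by simp [one_apply_ne hij]

section Coherence

variable {n : Type*} [Fintype n]

lemma isDensity_inv_smul {A : Matrix n n ℂ} (hA : A.PosSemidef) {t : ℝ} (ht : 0 < t)
    (htr : A.trace = t) : IsDensity (t⁻¹ • A) := by
  refine ⟨hA.smul (inv_nonneg.mpr ht.le), ?_⟩
  rw [trace_smul, htr, Complex.real_smul, Complex.ofReal_inv, inv_mul_cancel₀]
  exact_mod_cast ht.ne'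

variable [DecidableEq n]

lemma Cl1_eq_sum_perm {ρ : Matrix n n ℂ} (σ : Equiv.Perm n)
    (hρ : ∀ i j, i ≠ j → j ≠ σ i → ρ i j = 0) :
    Cl1 ρ = ∑ i, if i = σ i then 0 else ‖ρ i (σ i)‖ := by
  refine Finset.sum_congr rfl fun i _ => Finset.sum_eq_single (σ i) (fun j _ hj => ?_) (by simp)
  split_ifs with hij
  · rfl
  · rw [hρ i j hij hj, norm_zero]

lemma Cl1_le_of_support_perm {ρ τ : Matrix n n ℂ} (σ : Equiv.Perm n)
    (hρ : ∀ i j, i ≠ j → j ≠ σ i → ρ i j = 0) (hτ : IsDensity τ) {s : ℝ} (hs : 0 ≤ s)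
    (hρτ : ∀ i j, i ≠ j → ‖ρ i j‖ ≤ s * ‖τ i j‖) :
    Cl1 ρ ≤ s := by
  rw [Cl1_eq_sum_perm σ hρ]
  calc ∑ i, (if i = σ i then 0 else ‖ρ i (σ i)‖)
      ≤ ∑ i, s * ‖τ i (σ i)‖ := Finset.sum_le_sum fun i _ => by
        split_ifs with h
        · positivity
        · exact hρτ i (σ i) h
    _ = s * ∑ i, ‖τ i (σ i)‖ := (Finset.mul_sum ..).symm
    _ ≤ s * RCLike.re τ.trace := mul_le_mul_of_nonneg_left (hτ.1.sum_norm_apply_perm_le σ) hs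
    _ = s := by simp [hτ.2]

theorem cohWeight_eq_of_support_perm {ρ : Matrix n n ℂ} (σ : Equiv.Perm n)
    (hρ : ∀ i j, i ≠ j → j ≠ σ i → ρ i j = 0) {s : ℝ} (hCl1 : Cl1 ρ = s)
    (hs : s ∈ Set.Icc (0 : ℝ) 1)
    (hdec : ∃ ξ τ : Matrix n n ℂ, IsDensity ξ ∧ IsIncoherent ξ ∧ IsDensity τ ∧
      ρ = (1 - s) • ξ + s • τ) :
    cohWeight ρ = s := by
  refine IsLeast.csInf_eq ⟨⟨hs, hdec⟩, ?_⟩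
  rintro t ⟨ht, ξ, τ, -, hξ, hτ, rfl⟩
  rw [← hCl1]
  refine Cl1_le_of_support_perm σ hρ hτ ht.1 fun i j hij => ?_
  simp [hξ i j hij, abs_of_nonneg ht.1]

theorem cohRobustness_eq_of_support_perm {ρ : Matrix n n ℂ} (σ : Equiv.Perm n)
    (hρ : ∀ i j, i ≠ j → j ≠ σ i → ρ i j = 0) {s : ℝ} (hCl1 : Cl1 ρ = s) (hs : 0 ≤ s)
    (hmix : ∃ τ : Matrix n n ℂ, IsDensity τ ∧ IsIncoherent ((1 + s)⁻¹ • (ρ + s • τ))) :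
    cohRobustness ρ = s := by
  refine IsLeast.csInf_eq ⟨⟨hs, hmix⟩, ?_⟩
  rintro t ⟨ht, τ, hτ, hinc⟩
  rw [← hCl1]
  refine Cl1_le_of_support_perm σ hρ hτ ht fun i j hij => ?_
  have hsum : ρ i j + t • τ i j = 0 := by
    have h := hinc i j hij
    rw [Matrix.smul_apply, Matrix.add_apply, smul_eq_zero] at h
    exact h.resolve_left (by positivity)
  rw [eq_neg_of_add_eq_zero_left hsum, norm_neg, norm_smul, Real.norm_of_nonneg ht]

end Coherence

lemma Prod.eq_swap_iff_fst_eq_snd {α : Type*} {p : α × α} : p = p.swap ↔ p.1 = p.2 := by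
  simp [Prod.ext_iff, eq_comm]

lemma sum_ite_fst_eq_snd {ι R : Type*} [Fintype ι] [DecidableEq ι] [Ring R] (c : R) :
    ∑ p : ι × ι, (if p.1 = p.2 then 0 else c) = Fintype.card ι * (Fintype.card ι - 1) * c := by
  have hoff : ({p | ¬p.1 = p.2} : Finset (ι × ι)) = Finset.univ.offDiag := by
    ext p
    simp [Finset.mem_offDiag]
  rw [Finset.sum_ite, Finset.sum_const_zero, zero_add, Finset.sum_const, nsmul_eq_mul, hoff,
    Finset.offDiag_card, Finset.card_univ, Nat.cast_sub (Nat.le_mul_self _)]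
  push_cast
  rw [mul_sub, mul_one]

section Werner

variable {d : ℕ}

lemma mul_sub_one_pos (hd : 2 ≤ d) : (0 : ℝ) < d * (d - 1) := by
  have : (2 : ℝ) ≤ d := by exact_mod_cast hd
  nlinarith

lemma trace_eq_of_apply_self_eq_ite {M : Matrix (Fin d × Fin d) (Fin d × Fin d) ℂ}
    (hM : ∀ p, M p p = if p.1 = p.2 then 0 else 1) : M.trace = ((d * (d - 1) : ℝ) : ℂ) := by
  simp only [trace, diag_apply, hM, sum_ite_fst_eq_snd, Fintype.card_fin, mul_one]
  norm_cast

lemma swapMatrix_apply (p q : Fin d × Fin d) :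
    swapMatrix d p q = if q = p.swap then 1 else 0 := by
  simp [swapMatrix, Prod.ext_iff, eq_comm, and_comm]

lemma swapMatrix_isHermitian : (swapMatrix d).IsHermitian := by
  ext p q
  simp only [conjTranspose_apply, swapMatrix_apply, apply_ite star, star_one, star_zero]
  grind

lemma swapMatrix_mul_self : swapMatrix d * swapMatrix d = 1 := by
  ext p q
  simp only [mul_apply, swapMatrix_apply, ite_mul, one_mul, zero_mul, Finset.sum_ite_eq',
    Finset.mem_univ, if_true, Prod.swap_swap, one_apply, eq_comm]

lemma one_sub_swapMatrix_apply_self (p : Fin d × Fin d) :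
    (1 - swapMatrix d) p p = if p.1 = p.2 then 0 else 1 := by
  rw [Matrix.sub_apply, one_apply_eq, swapMatrix_apply]
  by_cases h : p.1 = p.2 <;> simp [h, Prod.eq_swap_iff_fst_eq_snd]

def offDiagProj (d : ℕ) : Matrix (Fin d × Fin d) (Fin d × Fin d) ℂ :=
  diagonal fun p => if p.1 = p.2 then 0 else 1

lemma offDiagProj_mul_mul_offDiagProj_apply (M : Matrix (Fin d × Fin d) (Fin d × Fin d) ℂ)
    (p q : Fin d × Fin d) :
    (offDiagProj d * M * offDiagProj d) p q =
      (if p.1 = p.2 then 0 else 1) * M p q * (if q.1 = q.2 then 0 else 1) := by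
  simp [offDiagProj, mul_diagonal, diagonal_mul]

lemma offDiagProj_one_add_swapMatrix_apply_self (p : Fin d × Fin d) :
    (offDiagProj d * (1 + swapMatrix d) * offDiagProj d) p p = if p.1 = p.2 then 0 else 1 := by
  rw [offDiagProj_mul_mul_offDiagProj_apply, Matrix.add_apply, one_apply_eq, swapMatrix_apply]
  by_cases h : p.1 = p.2 <;> simp [h, Prod.eq_swap_iff_fst_eq_snd]

lemma offDiagProj_one_add_swapMatrix_apply_of_ne {p q : Fin d × Fin d} (hpq : p ≠ q) :
    (offDiagProj d * (1 + swapMatrix d) * offDiagProj d) p q = swapMatrix d p q := by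
  rw [offDiagProj_mul_mul_offDiagProj_apply, Matrix.add_apply, one_apply_ne hpq,
    swapMatrix_apply]
  split_ifs <;> grind

lemma posSemidef_offDiagProj_one_add_swapMatrix :
    (offDiagProj d * (1 + swapMatrix d) * offDiagProj d).PosSemidef := by
  have hP : (offDiagProj d)ᴴ = offDiagProj d := by
    simp [offDiagProj, diagonal_conjTranspose, apply_ite star]
  have h1F : (1 + swapMatrix d).PosSemidef := by
    simpa using swapMatrix_isHermitian.neg.posSemidef_one_sub_of_mul_self_eq_one
      (by rw [neg_mul_neg, swapMatrix_mul_self])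
  simpa [hP] using h1F.conjTranspose_mul_mul_same (offDiagProj d)

variable {α : ℝ}

lemma wernerState_apply_of_ne {p q : Fin d × Fin d} (hpq : p ≠ q) :
    wernerState d α p q = -(α / (d * (d - 1)) : ℝ) • swapMatrix d p q := by
  simp [wernerState, one_apply_ne hpq]

lemma wernerState_apply_eq_zero (p q : Fin d × Fin d) (hpq : p ≠ q) (hq : q ≠ p.swap) :
    wernerState d α p q = 0 := by
  rw [wernerState_apply_of_ne hpq, swapMatrix_apply, if_neg hq, smul_zero]

lemma Cl1_wernerState (hd : 2 ≤ d) (hα : 0 ≤ α) : Cl1 (wernerState d α) = α := by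
  have hdd := mul_sub_one_pos hd
  rw [Cl1_eq_sum_perm (Equiv.prodComm _ _) wernerState_apply_eq_zero]
  calc ∑ p : Fin d × Fin d, (if p = p.swap then 0 else ‖wernerState d α p p.swap‖)
      = ∑ p : Fin d × Fin d, (if p.1 = p.2 then 0 else α / (d * (d - 1))) := by
        refine Finset.sum_congr rfl fun p _ => ?_
        simp only [Prod.eq_swap_iff_fst_eq_snd]
        split_ifs with h
        · rfl
        · rw [wernerState_apply_of_ne (mt Prod.eq_swap_iff_fst_eq_snd.mp h), swapMatrix_apply,
            if_pos rfl, norm_smul, norm_one, mul_one, norm_neg, Real.norm_of_nonneg (by positivity)]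
    _ = α := by
        rw [sum_ite_fst_eq_snd, Fintype.card_fin]
        exact mul_div_cancel₀ α hdd.ne'

lemma wernerState_eq_mix :
    wernerState d α = (1 - α) • (((d : ℝ) ^ 2)⁻¹ • (1 : Matrix (Fin d × Fin d) _ ℂ))
      + α • (((d : ℝ) * (d - 1))⁻¹ • (1 - swapMatrix d)) := by
  rw [wernerState, smul_smul, smul_smul, add_comm, div_eq_mul_inv, div_eq_mul_inv]

lemma isIncoherent_wernerState_add_smul :
    IsIncoherent ((1 + α)⁻¹ • (wernerState d α
      + α • (((d : ℝ) * (d - 1))⁻¹ • (offDiagProj d * (1 + swapMatrix d) * offDiagProj d)))) := by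
  intro p q hpq
  rw [Matrix.smul_apply, Matrix.add_apply, Matrix.smul_apply, Matrix.smul_apply,
    wernerState_apply_of_ne hpq, offDiagProj_one_add_swapMatrix_apply_of_ne hpq, smul_smul,
    ← add_smul, div_eq_mul_inv, neg_add_cancel, zero_smul, smul_zero]

end Werner

theorem werner_cohWeight_eq_robustness_eq_l1 {d : ℕ} (hd : 2 ≤ d)
    (α : ℝ) (hα : α ∈ Set.Icc (0 : ℝ) 1) :
    cohWeight (wernerState d α) = α ∧
    cohRobustness (wernerState d α) = α ∧
    Cl1 (wernerState d α) = α := by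
  have hCl1 := Cl1_wernerState hd hα.1
  have hdd := mul_sub_one_pos hd
  have hantisym : IsDensity (((d : ℝ) * (d - 1))⁻¹ • (1 - swapMatrix d)) :=
    isDensity_inv_smul
      (swapMatrix_isHermitian.posSemidef_one_sub_of_mul_self_eq_one swapMatrix_mul_self) hdd
      (trace_eq_of_apply_self_eq_ite one_sub_swapMatrix_apply_self)
  have hwitness : IsDensity
      (((d : ℝ) * (d - 1))⁻¹ • (offDiagProj d * (1 + swapMatrix d) * offDiagProj d)) :=
    isDensity_inv_smul posSemidef_offDiagProj_one_add_swapMatrix hdd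
      (trace_eq_of_apply_self_eq_ite offDiagProj_one_add_swapMatrix_apply_self)
  refine ⟨?_, ?_, hCl1⟩
  · exact cohWeight_eq_of_support_perm (Equiv.prodComm _ _) wernerState_apply_eq_zero hCl1 hα
      ⟨_, _, isDensity_inv_smul .one (by positivity) (by simp [sq]), isIncoherent_smul_one _,
        hantisym, wernerState_eq_mix⟩
  · exact cohRobustness_eq_of_support_perm (Equiv.prodComm _ _) wernerState_apply_eq_zero hCl1
      hα.1 ⟨_, hwitness, isIncoherent_wernerState_add_smul⟩
end
end

section
/- For all density matrices ρ₁ on ℂ^{d₁} and ρ₂ on ℂ^{d₂}, the robustness of coherence of their Kronecker (tensor) product satisfies C_R(ρ₁ ⊗ ρ₂) ≤ C_R(ρ₁) + C_R(ρ₂) + C_R(ρ₁)·C_R(ρ₂), where coherence on the tensor product is measured with respect to the product standard basis. -/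
/-! If `ρᵢ + Mᵢ` is incoherent with `Mᵢ ⪰ 0` of trace `sᵢ`, then so is the Kronecker product
`(ρ₁ + M₁) ⊗ (ρ₂ + M₂) = ρ₁ ⊗ ρ₂ + (M₁ ⊗ ρ₂ + ρ₁ ⊗ M₂ + M₁ ⊗ M₂)`, whose noise term is positive
semidefinite of trace `(1 + s₁)(1 + s₂) - 1`. Passing to infima gives the bound; the sets of
admissible weights are nonempty since `‖ρ‖ • 1 - ρ ⪰ 0`. -/

open Matrix BigOperators
open scoped ComplexOrder

noncomputable section

open Kronecker

open scoped Matrix.Norms.L2Operator MatrixOrder in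
lemma Matrix.IsHermitian.posSemidef_norm_smul_one_sub {n : Type*} [Fintype n] [DecidableEq n]
    {A : Matrix n n ℂ} (hA : A.IsHermitian) : (‖A‖ • (1 : Matrix n n ℂ) - A).PosSemidef := by
  simpa only [Matrix.le_iff, Algebra.algebraMap_eq_smul_one] using
    hA.isSelfAdjoint.le_algebraMap_norm_self

lemma IsDensity.kronecker {m n : Type*} [Fintype m] [Fintype n] {ρ₁ : Matrix m m ℂ}
    {ρ₂ : Matrix n n ℂ} (h₁ : IsDensity ρ₁) (h₂ : IsDensity ρ₂) : IsDensity (ρ₁ ⊗ₖ ρ₂) :=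
  ⟨h₁.1.kronecker h₂.1, by rw [trace_kronecker, h₁.2, h₂.2, mul_one]⟩

lemma IsIncoherent.kronecker {m n : Type*} {A : Matrix m m ℂ} {B : Matrix n n ℂ}
    (hA : IsIncoherent A) (hB : IsIncoherent B) : IsIncoherent (A ⊗ₖ B) := by
  rintro ⟨i, k⟩ ⟨j, l⟩ hne
  rw [kronecker_apply]
  by_cases hij : i = j
  · rw [hB k l fun hkl => hne (by rw [hij, hkl]), mul_zero]
  · rw [hA i j hij, zero_mul]

lemma isIncoherent_smul_iff {n : Type*} {A : Matrix n n ℂ} {c : ℝ} (hc : c ≠ 0) :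
    IsIncoherent (c • A) ↔ IsIncoherent A := by
  simp only [IsIncoherent, Matrix.smul_apply, smul_eq_zero, hc, false_or]

/-- The admissible weights `s` in `cohRobustness`, with the noise `s • τ` written as a
positive semidefinite matrix of trace `s`. -/
def robustnessSet {n : Type*} [Fintype n] (ρ : Matrix n n ℂ) : Set ℝ :=
  {s | ∃ M : Matrix n n ℂ, M.PosSemidef ∧ M.trace = s ∧ IsIncoherent (ρ + M)}

section robustnessSet

variable {n : Type*} [Fintype n] {ρ : Matrix n n ℂ}

lemma nonneg_of_mem_robustnessSet {s : ℝ} (hs : s ∈ robustnessSet ρ) : 0 ≤ s := by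
  obtain ⟨M, hM, htr, -⟩ := hs
  exact_mod_cast htr ▸ hM.trace_nonneg

lemma cohRobustness_eq_sInf_robustnessSet (hρ : IsDensity ρ) :
    cohRobustness ρ = sInf (robustnessSet ρ) := by
  refine congrArg sInf (Set.ext fun s => ⟨?_, fun hs => ?_⟩)
  · rintro ⟨hs, τ, hτ, hinc⟩
    refine ⟨s • τ, hτ.1.smul hs, by rw [trace_smul, hτ.2, Complex.real_smul, mul_one], ?_⟩
    exact (isIncoherent_smul_iff (by positivity)).mp hinc
  · obtain ⟨M, hM, htr, hinc⟩ := hs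
    have hs0 := nonneg_of_mem_robustnessSet ⟨M, hM, htr, hinc⟩
    refine ⟨hs0, ?_⟩
    rw [← isIncoherent_smul_iff (c := (1 + s)⁻¹) (by positivity)] at hinc
    rcases hs0.eq_or_lt with rfl | hpos
    · -- `M = 0`, so any state serves as `τ`
      refine ⟨ρ, hρ, by simpa [(hM.trace_eq_zero_iff).mp (by exact_mod_cast htr)] using hinc⟩
    · refine ⟨s⁻¹ • M, ⟨hM.smul (by positivity), ?_⟩, ?_⟩
      · rw [trace_smul, htr, Complex.real_smul, ← Complex.ofReal_mul, inv_mul_cancel₀ hpos.ne',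
          Complex.ofReal_one]
      · rwa [smul_smul, mul_inv_cancel₀ hpos.ne', one_smul]

lemma robustnessSet_nonempty [DecidableEq n] (hρ : ρ.IsHermitian) :
    (robustnessSet ρ).Nonempty := by
  have hM := hρ.posSemidef_norm_smul_one_sub
  exact ⟨_, _, hM, Complex.eq_re_of_ofReal_le hM.trace_nonneg,
    fun i j hij => by simp [one_apply_ne hij]⟩

end robustnessSet

lemma add_add_mul_mem_robustnessSet_kronecker {m n : Type*} [Fintype m] [Fintype n]
    {ρ₁ : Matrix m m ℂ} {ρ₂ : Matrix n n ℂ} (hρ₁ : IsDensity ρ₁) (hρ₂ : IsDensity ρ₂)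
    {s₁ s₂ : ℝ} (hs₁ : s₁ ∈ robustnessSet ρ₁) (hs₂ : s₂ ∈ robustnessSet ρ₂) :
    s₁ + s₂ + s₁ * s₂ ∈ robustnessSet (ρ₁ ⊗ₖ ρ₂) := by
  obtain ⟨M₁, hM₁, htr₁, hinc₁⟩ := hs₁
  obtain ⟨M₂, hM₂, htr₂, hinc₂⟩ := hs₂
  have hexpand : (ρ₁ + M₁) ⊗ₖ (ρ₂ + M₂) = ρ₁ ⊗ₖ ρ₂ + (M₁ ⊗ₖ ρ₂ + ρ₁ ⊗ₖ M₂ + M₁ ⊗ₖ M₂) := by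
    simp only [add_kronecker, kronecker_add]
    abel
  refine ⟨M₁ ⊗ₖ ρ₂ + ρ₁ ⊗ₖ M₂ + M₁ ⊗ₖ M₂,
    ((hM₁.kronecker hρ₂.1).add (hρ₁.1.kronecker hM₂)).add (hM₁.kronecker hM₂), ?_,
    hexpand ▸ hinc₁.kronecker hinc₂⟩
  simp only [trace_add, trace_kronecker, htr₁, htr₂, hρ₁.2, hρ₂.2]
  push_cast
  ring

lemma le_mul_one_add_csInf {S : Set ℝ} (hS : S.Nonempty) {a c : ℝ} (ha : 0 < a)
    (h : ∀ s ∈ S, c ≤ a * (1 + s)) : c ≤ a * (1 + sInf S) := by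
  have : c / a - 1 ≤ sInf S := le_csInf hS fun s hs => by
    rw [sub_le_iff_le_add', div_le_iff₀' ha]
    exact h s hs
  rwa [sub_le_iff_le_add', div_le_iff₀' ha] at this

lemma le_one_add_csInf_mul_one_add_csInf {S T : Set ℝ} (hS : S.Nonempty) (hT : T.Nonempty)
    (hS₀ : ∀ s ∈ S, 0 ≤ s) (hT₀ : ∀ t ∈ T, 0 ≤ t) {c : ℝ}
    (h : ∀ s ∈ S, ∀ t ∈ T, c ≤ (1 + s) * (1 + t)) : c ≤ (1 + sInf S) * (1 + sInf T) := by
  have hS_inf : 0 ≤ sInf S := le_csInf hS hS₀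
  refine le_mul_one_add_csInf hT (by positivity) fun t ht => ?_
  rw [mul_comm]
  refine le_mul_one_add_csInf hS (by linarith [hT₀ t ht]) fun s hs => ?_
  rw [mul_comm]
  exact h s hs t ht

theorem cohRobustness_tensor_submultiplicative {d₁ d₂ : ℕ}
    (ρ₁ : Matrix (Fin d₁) (Fin d₁) ℂ) (hρ₁ : IsDensity ρ₁)
    (ρ₂ : Matrix (Fin d₂) (Fin d₂) ℂ) (hρ₂ : IsDensity ρ₂) :
    cohRobustness (ρ₁ ⊗ₖ ρ₂) ≤
      cohRobustness ρ₁ + cohRobustness ρ₂ + cohRobustness ρ₁ * cohRobustness ρ₂ := by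
  rw [cohRobustness_eq_sInf_robustnessSet hρ₁, cohRobustness_eq_sInf_robustnessSet hρ₂,
    cohRobustness_eq_sInf_robustnessSet (hρ₁.kronecker hρ₂)]
  have hprod : 1 + sInf (robustnessSet (ρ₁ ⊗ₖ ρ₂)) ≤
      (1 + sInf (robustnessSet ρ₁)) * (1 + sInf (robustnessSet ρ₂)) := by
    refine le_one_add_csInf_mul_one_add_csInf (robustnessSet_nonempty hρ₁.1.isHermitian)
      (robustnessSet_nonempty hρ₂.1.isHermitian) (fun _ => nonneg_of_mem_robustnessSet)
      (fun _ => nonneg_of_mem_robustnessSet) fun s₁ hs₁ s₂ hs₂ => ?_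
    have := csInf_le ⟨0, fun _ => nonneg_of_mem_robustnessSet⟩
      (add_add_mul_mem_robustnessSet_kronecker hρ₁ hρ₂ hs₁ hs₂)
    linarith
  linarith
end
end
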